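/- arXiv:1503.01063 — 4 statements merged into one kernel-verified Lean document; each statement's English description precedes it below -/
import Mathlib

section
/- Consider sequences (W1(t))_{t∈ℤ} and (WM(t))_{t∈ℤ} with values in a finite field F, satisfying W1(t) = 0 and WM(t) = 0 for all t < 0. Fix nonzero k1, kM in F and an integer M ≥ 2. Define X_r(t) for r ∈ {1,...,M} recursively: X_1(t) = k1·W1(t) + kM·WM(t-(M-1)), X_M(t) = k1·W1(t-(M-1)) + kM·WM(t), and for 1 < r < M, X_r(t) = X_{r+1}(t-1) + X_{r-1}(t-1) + X_r(t-2) (with X_r(t) = 0 for t < 0). Then for all t ≥ 0 and all r ∈ {1,...,M}, X_r(t) = k1·W1(t-(r-1)) + kM·WM(t-(M-r)). -/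
/-- Invariant of the line-topology coding scheme (Section III-A): with messages
vanishing at negative times, endpoint transmissions given by the source rule and
interior nodes using X_r(t) = X_{r+1}(t-1) + X_{r-1}(t-1) + X_r(t-2), every node r
satisfies X_r(t) = k1·W1(t-(r-1)) + kM·WM(t-(M-r)) for all t ≥ 0. -/
theorem stmt1 (F : Type*) [Field F] [Fintype F] [CharP F 2]
    (W1 WM : ℤ → F) (hW1 : ∀ t < (0 : ℤ), W1 t = 0) (hWM : ∀ t < (0 : ℤ), WM t = 0)
    (k1 kM : F) (hk1 : k1 ≠ 0) (hkM : kM ≠ 0)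
    (M : ℤ) (hM : 2 ≤ M)
    (X : ℤ → ℤ → F)
    (hXneg : ∀ r t, t < 0 → X r t = 0)
    (hX1 : ∀ t ≥ (0 : ℤ), X 1 t = k1 * W1 t + kM * WM (t - (M - 1)))
    (hXM : ∀ t ≥ (0 : ℤ), X M t = k1 * W1 (t - (M - 1)) + kM * WM t)
    (hXr : ∀ r : ℤ, 1 < r → r < M → ∀ t ≥ (0 : ℤ),
      X r t = X (r + 1) (t - 1) + X (r - 1) (t - 1) + X r (t - 2)) :
    ∀ t ≥ (0 : ℤ), ∀ r : ℤ, 1 ≤ r → r ≤ M →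
      X r t = k1 * W1 (t - (r - 1)) + kM * WM (t - (M - r)) := by
  have h2 : (2 : F) = 0 := CharP.cast_eq_zero F 2
  have key : ∀ n : ℕ, ∀ t : ℤ, t ≤ (n : ℤ) → ∀ r : ℤ, 1 ≤ r → r ≤ M →
      X r t = k1 * W1 (t - (r - 1)) + kM * WM (t - (M - r)) := by
    intro n
    induction n with
    | zero =>
      intro t ht r hr1 hrM
      simp only [Nat.cast_zero] at ht
      rcases lt_or_eq_of_le ht with h | h
      · rw [hXneg r t h, hW1 _ (by omega), hWM _ (by omega)]; ring
      · subst h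
        rcases eq_or_lt_of_le hr1 with h1 | h1
        · subst h1
          rw [hX1 0 le_rfl]
          norm_num
        · rcases eq_or_lt_of_le hrM with hm | hm
          · subst hm
            rw [hXM 0 le_rfl]
            norm_num
          · rw [hXr r h1 hm 0 le_rfl, hXneg _ _ (by norm_num), hXneg _ _ (by norm_num),
              hXneg _ _ (by norm_num), hW1 _ (by omega), hWM _ (by omega)]
            ring
    | succ n ih =>
      intro t ht r hr1 hrM
      by_cases hle : t ≤ (n : ℤ)
      · exact ih t hle r hr1 hrM
      · have ht' : t = (n : ℤ) + 1 := by push_cast at ht ⊢; omega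
        have ht0 : (0 : ℤ) ≤ t := by omega
        rcases eq_or_lt_of_le hr1 with h1 | h1
        · subst h1
          rw [hX1 t ht0]
          norm_num
        · rcases eq_or_lt_of_le hrM with hm | hm
          · subst hm
            rw [hXM t ht0]
            norm_num
          · rw [hXr r h1 hm t ht0,
              ih (t - 1) (by omega) (r + 1) (by omega) (by omega),
              ih (t - 1) (by omega) (r - 1) (by omega) (by omega),
              ih (t - 2) (by omega) r hr1 hrM,
              show t - 1 - (r + 1 - 1) = t - 1 - r by ring,
              show t - 1 - (M - (r + 1)) = t - M + r by ring,
              show t - 1 - (r - 1 - 1) = t - (r - 1) by ring,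
              show t - 1 - (M - (r - 1)) = t - 2 - M + r by ring,
              show t - 2 - (r - 1) = t - 1 - r by ring,
              show t - 2 - (M - r) = t - 2 - M + r by ring,
              show t - (M - r) = t - M + r by ring]
            linear_combination (k1 * W1 (t - 1 - r) + kM * WM (t - 2 - M + r)) * h2
  intro t ht r hr1 hrM
  exact key t.toNat t (by omega) r hr1 hrM
end

section
/- Let F be a field of characteristic 2, and let W1, W2, W3 : ℤ → F be message sequences that vanish at negative times. Fix coefficients k1, k2, k3 ∈ F. Define source transmissions X_i(t) = k_i·W_i(2⌊t/2⌋) + k_j·W_j(2⌊(t-3)/2⌋) + k_l·W_l(2⌊(t-3)/2⌋) for {i,j,l} = {1,2,3}, and define the relay transmission X_4(t) = X_1(t-1) + X_2(t-1) + X_3(t-1). Then X_4(t) = k1·W1(2⌊(t-1)/2⌋) + k2·W2(2⌊(t-1)/2⌋) + k3·W3(2⌊(t-1)/2⌋) for all t. -/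
/-- `ev t = 2⌊t/2⌋` using floor division on `ℤ`. -/
def ev (t : ℤ) : ℤ := 2 * Int.fdiv t 2

/-- The star-topology algebraic identity (Eq. (9)): with sources coding
X_i(t) = k_i W_i(2⌊t/2⌋) + k_j W_j(2⌊(t-3)/2⌋) + k_l W_l(2⌊(t-3)/2⌋) and the relay
sending X_4(t) = X_1(t-1)+X_2(t-1)+X_3(t-1) over a field of characteristic 2,
X_4(t) = k1 W1(2⌊(t-1)/2⌋) + k2 W2(2⌊(t-1)/2⌋) + k3 W3(2⌊(t-1)/2⌋). -/
theorem stmt2 (F : Type*) [Field F] [CharP F 2]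
    (W1 W2 W3 : ℤ → F)
    (hv1 : ∀ t < (0 : ℤ), W1 t = 0) (hv2 : ∀ t < (0 : ℤ), W2 t = 0)
    (hv3 : ∀ t < (0 : ℤ), W3 t = 0)
    (k1 k2 k3 : F)
    (X1 X2 X3 X4 : ℤ → F)
    (hX1 : ∀ t, X1 t = k1 * W1 (ev t) + k2 * W2 (ev (t - 3)) + k3 * W3 (ev (t - 3)))
    (hX2 : ∀ t, X2 t = k2 * W2 (ev t) + k1 * W1 (ev (t - 3)) + k3 * W3 (ev (t - 3)))
    (hX3 : ∀ t, X3 t = k3 * W3 (ev t) + k1 * W1 (ev (t - 3)) + k2 * W2 (ev (t - 3)))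
    (hX4 : ∀ t, X4 t = X1 (t - 1) + X2 (t - 1) + X3 (t - 1)) :
    ∀ t, X4 t = k1 * W1 (ev (t - 1)) + k2 * W2 (ev (t - 1)) + k3 * W3 (ev (t - 1)) := by
  intro t
  have h2 : (2 : F) = 0 := by exact_mod_cast CharP.cast_eq_zero F 2
  rw [hX4, hX1, hX2, hX3]
  linear_combination (k1 * W1 (ev (t - 1 - 3)) + k2 * W2 (ev (t - 1 - 3))
    + k3 * W3 (ev (t - 1 - 3))) * h2
end

section
/- In a directed graph with unit-capacity edges and three distinguished source vertices i, j, l, the value of the minimum edge cut separating i from j equals the minimum of the value of the minimum cut separating i from {j,l} and the value of the minimum cut separating j from {i,l}, provided vertex l lies on one side of every minimum i–j cut. More precisely: C_{i;j} = min{C_{i;{j,l}}, C_{j;{i,l}}}, where C_{i;j} denotes the minimum i–j cut value and C_{i;{j,l}} denotes the minimum cut value separating i from both j and l, in a bidirectional graph (every edge has a reverse edge of equal capacity). -/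
variable {V : Type*} [Fintype V] [DecidableEq V]

/-- The value of the cut determined by a vertex set `A`: the total capacity of edges
leaving `A`. -/
def cutVal (cap : V → V → ℕ) (A : Finset V) : ℕ :=
  ∑ u ∈ A, ∑ v ∈ Aᶜ, cap u v

/-- The minimum value of a cut separating `s` from all vertices of `T`. -/
noncomputable def minCut (cap : V → V → ℕ) (s : V) (T : Finset V) : ℕ :=
  sInf {c | ∃ A : Finset V, s ∈ A ∧ (∀ t ∈ T, t ∉ A) ∧ c = cutVal cap A}

/-- Eq. (19): in a bidirectional graph (symmetric capacities), for distinct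
vertices i, j, l one has C_{i;j} = min{C_{i;{j,l}}, C_{j;{i,l}}}. -/
theorem stmt4 (cap : V → V → ℕ) (hsymm : ∀ u v, cap u v = cap v u)
    (i j l : V) (hij : i ≠ j) (hil : i ≠ l) (hjl : j ≠ l) :
    minCut cap i {j} = min (minCut cap i {j, l}) (minCut cap j {i, l}) := by
  have hcompl : ∀ A : Finset V, cutVal cap Aᶜ = cutVal cap A := by
    intro A
    unfold cutVal
    rw [compl_compl, Finset.sum_comm]
    exact Finset.sum_congr rfl fun u _ => Finset.sum_congr rfl fun v _ => hsymm v u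
  unfold minCut
  apply le_antisymm
  · apply le_min
    · -- any cut separating i from {j,l} separates i from j
      apply csInf_le_csInf (OrderBot.bddBelow _)
      · exact ⟨cutVal cap {i}, {i}, Finset.mem_singleton_self i, by
          intro t ht
          simp only [Finset.mem_insert, Finset.mem_singleton] at ht
          rcases ht with rfl | rfl <;> simp [hij.symm, hil.symm], rfl⟩
      · rintro c ⟨A, hiA, hT, rfl⟩
        exact ⟨A, hiA, fun t ht => hT t (by simp at ht ⊢; exact Or.inl ht), rfl⟩
    · -- complement of a cut separating j from {i,l}
      apply csInf_le_csInf (OrderBot.bddBelow _)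
      · exact ⟨cutVal cap {j}, {j}, Finset.mem_singleton_self j, by
          intro t ht
          simp only [Finset.mem_insert, Finset.mem_singleton] at ht
          rcases ht with rfl | rfl <;> simp [hij, hjl.symm], rfl⟩
      · rintro c ⟨A, hjA, hT, rfl⟩
        refine ⟨Aᶜ, ?_, ?_, (hcompl A).symm⟩
        · simp only [Finset.mem_compl]
          exact hT i (by simp)
        · intro t ht
          simp only [Finset.mem_singleton] at ht
          subst ht
          simp [hjA]
  · -- the minimal i-j cut: l is on one side or the other
    have hne : {c | ∃ A : Finset V, i ∈ A ∧ (∀ t ∈ ({j} : Finset V), t ∉ A) ∧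
        c = cutVal cap A}.Nonempty :=
      ⟨cutVal cap {i}, {i}, Finset.mem_singleton_self i, by
        intro t ht; simp only [Finset.mem_singleton] at ht; subst ht; simp [hij.symm], rfl⟩
    obtain ⟨A, hiA, hT, hval⟩ := Nat.sInf_mem hne
    by_cases hl : l ∈ A
    · -- Aᶜ separates j from {i, l}
      refine le_trans (min_le_right _ _) ?_
      rw [hval]
      refine Nat.sInf_le ⟨Aᶜ, ?_, ?_, (hcompl A).symm⟩
      · simp only [Finset.mem_compl]
        exact hT j (Finset.mem_singleton_self j)
      · intro t ht
        simp only [Finset.mem_insert, Finset.mem_singleton] at ht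
        rcases ht with rfl | rfl <;> simp [hiA, hl]
    · refine le_trans (min_le_left _ _) ?_
      rw [hval]
      refine Nat.sInf_le ⟨A, hiA, ?_, rfl⟩
      intro t ht
      simp only [Finset.mem_insert, Finset.mem_singleton] at ht
      rcases ht with rfl | rfl
      · exact hT t (Finset.mem_singleton_self t)
      · exact hl
end

section
/- Let G be a bidirectional directed graph with three sources i, j, l and unit-capacity edges, and let the rate region be defined by R_{i→j} + R_{i→l} ≤ C_{i;{j,l}} for all permutations of {i,j,l}, together with R_{i→j} ≤ C_{i;j}, under the symmetry constraints R_{i→j} = R_{j→i}. Then each corner point of this region with R_{i→j} = C_{i;j} and C_{i;j} = C_{i;{j,l}} satisfies R_{i→l} = 0 and R_{j→l} = max(C_{j;{i,l}} − C_{i;j}, 0). -/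
variable {V : Type*} [Fintype V] [DecidableEq V]

lemma cutVal_eq (cap : V → V → ℕ) (A : Finset V) :
    cutVal cap A = ∑ u : V, ∑ v : V, if u ∈ A ∧ v ∉ A then cap u v else 0 := by
  unfold cutVal
  rw [← Finset.sum_subset (Finset.subset_univ A)]
  · apply Finset.sum_congr rfl
    intro u hu
    rw [← Finset.sum_subset (Finset.subset_univ Aᶜ)]
    · apply Finset.sum_congr rfl
      intro v hv
      simp [Finset.mem_compl.mp hv, hu]
    · intro v _ hv
      simp at hv
      simp [hv]
  · intro u _ hu
    apply Finset.sum_eq_zero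
    intro v _
    simp [hu]

lemma cutVal_compl (cap : V → V → ℕ) (hsymm : ∀ u v, cap u v = cap v u) (A : Finset V) :
    cutVal cap Aᶜ = cutVal cap A := by
  unfold cutVal
  rw [compl_compl, Finset.sum_comm]
  exact Finset.sum_congr rfl fun v _ => Finset.sum_congr rfl fun u _ => hsymm u v

lemma cutVal_union_le (cap : V → V → ℕ) (A B : Finset V) :
    cutVal cap (A ∪ B) ≤ cutVal cap A + cutVal cap B := by
  simp only [cutVal_eq]
  rw [← Finset.sum_add_distrib]
  apply Finset.sum_le_sum
  intro u _
  rw [← Finset.sum_add_distrib]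
  apply Finset.sum_le_sum
  intro v _
  simp only [Finset.mem_union, not_or]
  split_ifs <;> first | omega | tauto

lemma minCut_le (cap : V → V → ℕ) (s : V) (T : Finset V) (A : Finset V)
    (hs : s ∈ A) (hT : ∀ t ∈ T, t ∉ A) : minCut cap s T ≤ cutVal cap A :=
  Nat.sInf_le ⟨A, hs, hT, rfl⟩

lemma minCut_exists (cap : V → V → ℕ) (s : V) (T : Finset V) (hs : s ∉ T) :
    ∃ A : Finset V, s ∈ A ∧ (∀ t ∈ T, t ∉ A) ∧ minCut cap s T = cutVal cap A := by
  have hne : {c | ∃ A : Finset V, s ∈ A ∧ (∀ t ∈ T, t ∉ A) ∧ c = cutVal cap A}.Nonempty :=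
    ⟨cutVal cap {s}, {s}, Finset.mem_singleton_self s,
      fun t ht h => hs (Finset.mem_singleton.mp h ▸ ht), rfl⟩
  exact Nat.sInf_mem hne

/-- Corner-point characterization (Eq. (20)) of the equal-rate multiple-unicast
region: if a feasible rate tuple has R_{i→j} = C_{i;j} with C_{i;j} = C_{i;{j,l}},
and R_{j→l} is maximal subject to the remaining constraints, then R_{i→l} = 0 and
R_{j→l} = [C_{j;{i,l}} − C_{i;j}]⁺. -/
theorem stmt13 (cap : V → V → ℕ) (hsymm : ∀ u v, cap u v = cap v u)
    (i j l : V) (hij : i ≠ j) (hil : i ≠ l) (hjl : j ≠ l)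
    (Rij Rji Ril Rli Rjl Rlj : ℝ)
    (hnn1 : 0 ≤ Rij) (hnn2 : 0 ≤ Ril) (hnn3 : 0 ≤ Rjl)
    (hs1 : Rij = Rji) (hs2 : Ril = Rli) (hs3 : Rjl = Rlj)
    (hcut_i : Rij + Ril ≤ (minCut cap i {j, l} : ℝ))
    (hcut_j : Rji + Rjl ≤ (minCut cap j {i, l} : ℝ))
    (hcut_l : Rli + Rlj ≤ (minCut cap l {i, j} : ℝ))
    (hpair_ij : Rij ≤ (minCut cap i {j} : ℝ))
    (hpair_il : Ril ≤ (minCut cap i {l} : ℝ))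
    (hpair_jl : Rjl ≤ (minCut cap j {l} : ℝ))
    (hcorner : Rij = (minCut cap i {j} : ℝ))
    (heq : minCut cap i {j} = minCut cap i {j, l})
    (hmax : ∀ R' : ℝ, 0 ≤ R' →
      Rji + R' ≤ (minCut cap j {i, l} : ℝ) →
      R' ≤ (minCut cap j {l} : ℝ) →
      Rli + R' ≤ (minCut cap l {i, j} : ℝ) → R' ≤ Rjl) :
    Ril = 0 ∧
    Rjl = max ((minCut cap j {i, l} : ℝ) - (minCut cap i {j} : ℝ)) 0 := by
  -- Notation for the relevant min-cuts
  set nCij := minCut cap i {j} with hnCij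
  set nCj := minCut cap j {i, l} with hnCj
  set nCl := minCut cap l {i, j} with hnCl
  set nCjl := minCut cap j {l} with hnCjl
  -- R_{i→l} = 0
  have hcast : ((minCut cap i {j, l} : ℕ) : ℝ) = (nCij : ℝ) := by rw [heq]
  have hRil : Ril = 0 := by
    have := hcut_i
    rw [hcast] at this
    linarith [hcorner ▸ this]
  -- Identity: C_{i;j} ≤ C_{j;{i,l}}
  have hA : nCij ≤ nCj := by
    obtain ⟨B, hjB, hTB, hB⟩ := minCut_exists cap j {i, l} (by simp [hij.symm, hjl])
    have hiB : i ∉ B := hTB i (by simp)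
    have h1 : nCij ≤ cutVal cap Bᶜ := by
      apply minCut_le
      · exact Finset.mem_compl.mpr hiB
      · intro t ht
        rw [Finset.mem_singleton] at ht
        subst ht
        simp [hjB]
    rw [cutVal_compl cap hsymm] at h1
    omega
  -- Triangle 1: C_{j;{i,l}} ≤ C_{i;j} + C_{l;{i,j}}
  have tri1 : nCj ≤ nCij + nCl := by
    obtain ⟨A, hiA, hTA, hAeq⟩ := minCut_exists cap i {j} (by simp [hij])
    obtain ⟨B, hlB, hTB, hBeq⟩ := minCut_exists cap l {i, j} (by simp [hil.symm, hjl.symm])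
    have hjA : j ∉ A := hTA j (by simp)
    have hjB : j ∉ B := hTB j (by simp)
    have hiB : i ∉ B := hTB i (by simp)
    have h1 : nCj ≤ cutVal cap (A ∪ B)ᶜ := by
      apply minCut_le
      · simp [hjA, hjB]
      · intro t ht
        simp only [Finset.mem_insert, Finset.mem_singleton] at ht
        rcases ht with rfl | rfl <;> simp [hiA, hlB]
    rw [cutVal_compl cap hsymm] at h1
    calc nCj ≤ cutVal cap (A ∪ B) := h1
      _ ≤ cutVal cap A + cutVal cap B := cutVal_union_le cap A B
      _ = nCij + nCl := by rw [hnCij, hnCl, hAeq, hBeq]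
  -- Triangle 2: C_{j;{i,l}} ≤ C_{i;j} + C_{j;l}
  have tri2 : nCj ≤ nCij + nCjl := by
    obtain ⟨A, hiA, hTA, hAeq⟩ := minCut_exists cap i {j} (by simp [hij])
    obtain ⟨D, hjD, hTD, hDeq⟩ := minCut_exists cap j {l} (by simp [hjl])
    have hjA : j ∉ A := hTA j (by simp)
    have hlD : l ∉ D := hTD l (by simp)
    have h1 : nCj ≤ cutVal cap (A ∪ Dᶜ)ᶜ := by
      apply minCut_le
      · simp [hjA, hjD]
      · intro t ht
        simp only [Finset.mem_insert, Finset.mem_singleton] at ht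
        rcases ht with rfl | rfl <;> simp [hiA, hlD]
    rw [cutVal_compl cap hsymm] at h1
    calc nCj ≤ cutVal cap (A ∪ Dᶜ) := h1
      _ ≤ cutVal cap A + cutVal cap Dᶜ := cutVal_union_le cap A Dᶜ
      _ = nCij + nCjl := by rw [cutVal_compl cap hsymm, hnCij, hnCjl, hAeq, hDeq]
  -- Real arithmetic
  have hAr : (nCij : ℝ) ≤ (nCj : ℝ) := Nat.cast_le.mpr hA
  have tri1r : (nCj : ℝ) ≤ (nCij : ℝ) + (nCl : ℝ) := by exact_mod_cast tri1
  have tri2r : (nCj : ℝ) ≤ (nCij : ℝ) + (nCjl : ℝ) := by exact_mod_cast tri2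
  refine ⟨hRil, ?_⟩
  have hmaxeq : max ((nCj : ℝ) - (nCij : ℝ)) 0 = (nCj : ℝ) - (nCij : ℝ) :=
    max_eq_left (by linarith)
  rw [hmaxeq]
  have hupper : Rjl ≤ (nCj : ℝ) - (nCij : ℝ) := by
    have := hcut_j
    rw [← hs1, hcorner] at this
    linarith
  have hlower : (nCj : ℝ) - (nCij : ℝ) ≤ Rjl := by
    apply hmax
    · linarith
    · rw [← hs1, hcorner]; linarith
    · linarith
    · rw [← hs2, hRil]; linarith
  linarith
end
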